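/- Let f : 𝔤* → ℝ be smooth and μ : H → 𝔤* the moment map μ(x)(X) = ½ ω(ρ'(X)x, x) of a skew-adjoint Lie algebra action ρ'. Then the ω-gradient of the pullback f ∘ μ exists and is given by grad(f∘μ)(x) = ρ'(df(μ(x)))x, where df(μ(x)) ∈ (𝔤*)* ≅ 𝔤; i.e. d(f∘μ)(x)(y) = ω(ρ'(df(μ(x)))x, y) for all y ∈ H. -/

import Mathlib

noncomputable def momentMap {H : Type*} [NormedAddCommGroup H]
    [InnerProductSpace ℂ H] [CompleteSpace H]
    {g : Type*} [NormedAddCommGroup g] [NormedSpace ℝ g] [FiniteDimensional ℝ g]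
    (ρ' : g →ₗ[ℝ] (H →L[ℂ] H)) (x : H) : g →L[ℝ] ℝ :=
  LinearMap.toContinuousLinearMap
  { toFun := fun X => (1 / 2 : ℝ) * (inner ℂ x (ρ' X x) : ℂ).im
    map_add' := by
      intro X Y
      simp [inner_add_right]
      ring
    map_smul' := by
      intro c X
      simp only [map_smul, ContinuousLinearMap.coe_smul', Pi.smul_apply,
        RingHom.id_apply, smul_eq_mul]
      rw [← algebraMap_smul ℂ c ((ρ' X) x), Complex.coe_algebraMap,
        inner_smul_right]
      simp [Complex.mul_im]
      ring }

section Aux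

variable {H : Type*} [NormedAddCommGroup H] [InnerProductSpace ℂ H] [CompleteSpace H]
variable {g : Type*} [NormedAddCommGroup g] [NormedSpace ℝ g] [FiniteDimensional ℝ g]
variable (ρ' : g →ₗ[ℝ] (H →L[ℂ] H))

/-- `X ↦ ½ Im⟪x, ρ'X y⟫` as a continuous linear map on `g`. -/
noncomputable def momAux (x y : H) : g →L[ℝ] ℝ :=
  LinearMap.toContinuousLinearMap
  { toFun := fun X => (1 / 2 : ℝ) * (inner ℂ x (ρ' X y) : ℂ).im
    map_add' := by
      intro X Y
      simp [inner_add_right]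
      ring
    map_smul' := by
      intro c X
      simp only [map_smul, ContinuousLinearMap.coe_smul', Pi.smul_apply,
        RingHom.id_apply, smul_eq_mul]
      rw [← algebraMap_smul ℂ c ((ρ' X) y), Complex.coe_algebraMap,
        inner_smul_right]
      simp [Complex.mul_im]
      ring }

@[simp] lemma momAux_apply (x y : H) (X : g) :
    momAux ρ' x y X = (1 / 2 : ℝ) * (inner ℂ x (ρ' X y) : ℂ).im := rfl

lemma momAux_add_left (x x' y : H) :
    momAux ρ' (x + x') y = momAux ρ' x y + momAux ρ' x' y := by
  ext X; simp [inner_add_left]; ring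

lemma momAux_smul_left (c : ℝ) (x y : H) :
    momAux ρ' (c • x) y = c • momAux ρ' x y := by
  ext X
  simp only [momAux_apply, ContinuousLinearMap.coe_smul', Pi.smul_apply, smul_eq_mul]
  rw [← algebraMap_smul ℂ c x, Complex.coe_algebraMap, inner_smul_left]
  simp [Complex.mul_im]
  ring

lemma momAux_add_right (x y y' : H) :
    momAux ρ' x (y + y') = momAux ρ' x y + momAux ρ' x y' := by
  ext X; simp [inner_add_right]; ring

lemma momAux_smul_right (c : ℝ) (x y : H) :
    momAux ρ' x (c • y) = c • momAux ρ' x y := by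
  ext X
  simp only [momAux_apply, ContinuousLinearMap.coe_smul', Pi.smul_apply, smul_eq_mul]
  rw [← algebraMap_smul ℂ c y, map_smul, Complex.coe_algebraMap, inner_smul_right]
  simp [Complex.mul_im]
  ring

lemma momAux_norm_le (x y : H) :
    ‖momAux ρ' x y‖ ≤ ((1/2 : ℝ) * ‖LinearMap.toContinuousLinearMap ρ'‖) * ‖x‖ * ‖y‖ := by
  set C := ‖LinearMap.toContinuousLinearMap ρ'‖ with hC
  have hC0 : 0 ≤ C := norm_nonneg _
  apply ContinuousLinearMap.opNorm_le_bound
  · positivity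
  intro X
  have h1 : |(inner ℂ x (ρ' X y) : ℂ).im| ≤ ‖(inner ℂ x (ρ' X y) : ℂ)‖ := by
    simpa using Complex.abs_im_le_norm (inner ℂ x (ρ' X y) : ℂ)
  have h2 : ‖(inner ℂ x (ρ' X y) : ℂ)‖ ≤ ‖x‖ * ‖(ρ' X) y‖ := norm_inner_le_norm _ _
  have h3 : ‖(ρ' X) y‖ ≤ ‖ρ' X‖ * ‖y‖ := (ρ' X).le_opNorm y
  have h4 : ‖ρ' X‖ ≤ C * ‖X‖ := by
    simpa using (LinearMap.toContinuousLinearMap ρ').le_opNorm X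
  have hx0 : 0 ≤ ‖x‖ := norm_nonneg _
  have hy0 : 0 ≤ ‖y‖ := norm_nonneg _
  have h5 : ‖(ρ' X) y‖ ≤ C * ‖X‖ * ‖y‖ := h3.trans (mul_le_mul_of_nonneg_right h4 hy0)
  have h6 : ‖x‖ * ‖(ρ' X) y‖ ≤ ‖x‖ * (C * ‖X‖ * ‖y‖) := mul_le_mul_of_nonneg_left h5 hx0
  calc ‖momAux ρ' x y X‖ = (1/2 : ℝ) * |(inner ℂ x (ρ' X y) : ℂ).im| := by
        simp [abs_mul, Real.norm_eq_abs]
    _ ≤ (1/2 : ℝ) * (‖x‖ * (C * ‖X‖ * ‖y‖)) := by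
        have := h1.trans (h2.trans h6); linarith
    _ = (1/2 : ℝ) * C * ‖x‖ * ‖y‖ * ‖X‖ := by ring

/-- The moment map as a continuous bilinear map. -/
noncomputable def momB : H →L[ℝ] H →L[ℝ] (g →L[ℝ] ℝ) :=
  LinearMap.mkContinuous₂
    { toFun := fun x =>
        { toFun := fun y => momAux ρ' x y
          map_add' := momAux_add_right ρ' x
          map_smul' := fun c y => momAux_smul_right ρ' c x y }
      map_add' := fun x x' => LinearMap.ext fun y => momAux_add_left ρ' x x' y
      map_smul' := fun c x => LinearMap.ext fun y => momAux_smul_left ρ' c x y }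
    ((1/2 : ℝ) * ‖LinearMap.toContinuousLinearMap ρ'‖)
    (fun x y => momAux_norm_le ρ' x y)

@[simp] lemma momB_apply (x y : H) : momB ρ' x y = momAux ρ' x y := rfl

lemma momentMap_eq (x : H) : momentMap ρ' x = momB ρ' x x := rfl

end Aux

/-- For a smooth `f : 𝔤* → ℝ` whose derivative at `α` is represented by
`ξ(α) ∈ 𝔤` (i.e. `df(α)(β) = β(ξ(α))`), the pullback `f ∘ μ` of `f` by the
moment map has ω-gradient `x ↦ ρ'(df(μ(x)))x`, i.e.
`d(f∘μ)(x)(y) = ω(ρ'(ξ(μ(x)))x, y) = Im⟨ρ'(ξ(μ(x)))x, y⟩`. -/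
theorem statement12 {H : Type*} [NormedAddCommGroup H] [InnerProductSpace ℂ H]
    [CompleteSpace H]
    {g : Type*} [NormedAddCommGroup g] [NormedSpace ℝ g] [FiniteDimensional ℝ g]
    [LieRing g] [LieAlgebra ℝ g]
    (ρ' : (@LinearMap ℝ ℝ _ _ (RingHom.id ℝ) g (H →L[ℂ] H)
      (@NormedAddCommGroup.toAddCommGroup g _).toAddCommMonoid _
      (@NormedSpace.toModule ℝ g _ _ _) _))
    (hskew : ∀ X : g, ContinuousLinearMap.adjoint (ρ' X) = -(ρ' X))
    (hhom : ∀ X Y : g, ρ' ⁅X, Y⁆ = ρ' X * ρ' Y - ρ' Y * ρ' X)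
    (f : (@ContinuousLinearMap ℝ ℝ _ _ (RingHom.id ℝ) g _
      (@NormedAddCommGroup.toAddCommGroup g _).toAddCommMonoid ℝ _ _
      (@NormedSpace.toModule ℝ g _ _ _) _) → ℝ) (hf : ContDiff ℝ (⊤ : ℕ∞) f)
    (ξ : (@ContinuousLinearMap ℝ ℝ _ _ (RingHom.id ℝ) g _
      (@NormedAddCommGroup.toAddCommGroup g _).toAddCommMonoid ℝ _ _
      (@NormedSpace.toModule ℝ g _ _ _) _) → g)
    (hξ : ∀ (α : @ContinuousLinearMap ℝ ℝ _ _ (RingHom.id ℝ) g _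
      (@NormedAddCommGroup.toAddCommGroup g _).toAddCommMonoid ℝ _ _
      (@NormedSpace.toModule ℝ g _ _ _) _)
      (β : @ContinuousLinearMap ℝ ℝ _ _ (RingHom.id ℝ) g _
      (@NormedAddCommGroup.toAddCommGroup g _).toAddCommMonoid ℝ _ _
      (@NormedSpace.toModule ℝ g _ _ _) _), fderiv ℝ f α β = β (ξ α)) :
    ∀ x y : H,
      fderiv ℝ (fun x => f (momentMap ρ' x)) x y =
        (inner ℂ y (ρ' (ξ (momentMap ρ' x)) x) : ℂ).im := by
  intro x y
  -- derivative of the moment map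
  have hμ : HasFDerivAt (fun z : H => momB ρ' z z)
      ((momB ρ' x).comp (ContinuousLinearMap.id ℝ H) + (momB ρ').flip x) x := by
    simpa using ((momB ρ').hasFDerivAt.clm_apply (hasFDerivAt_id x))
  have hfd : HasFDerivAt f (fderiv ℝ f (momentMap ρ' x)) (momentMap ρ' x) :=
    ((hf.differentiable (by simp)) (momentMap ρ' x)).hasFDerivAt
  have hfun : (fun z : H => f (momentMap ρ' z)) = f ∘ (fun z : H => momB ρ' z z) := rfl
  have hcomp : HasFDerivAt (fun z : H => f (momentMap ρ' z))
      ((fderiv ℝ f (momentMap ρ' x)).comp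
        ((momB ρ' x).comp (ContinuousLinearMap.id ℝ H) + (momB ρ').flip x)) x := by
    rw [hfun]
    exact hfd.comp x hμ
  rw [hcomp.fderiv]
  simp only [ContinuousLinearMap.coe_comp', Function.comp_apply,
    ContinuousLinearMap.add_apply, ContinuousLinearMap.coe_id', id_eq,
    ContinuousLinearMap.flip_apply]
  rw [hξ]
  simp only [ContinuousLinearMap.add_apply, momB_apply, momAux_apply]
  have hAdj := hskew (ξ (momentMap ρ' x))
  generalize hg : ρ' (ξ (momentMap ρ' x)) = A at hAdj ⊢
  have key : (inner ℂ x (A y) : ℂ) = - (inner ℂ (A x) y : ℂ) := by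
    rw [← ContinuousLinearMap.adjoint_inner_left, hAdj]
    simp
  have him : ((inner ℂ (A x) y : ℂ)).im = - ((inner ℂ y (A x) : ℂ)).im := by
    rw [← inner_conj_symm (A x) y]
    exact Complex.conj_im _
  have h1 : ((inner ℂ x (A y) : ℂ)).im = ((inner ℂ y (A x) : ℂ)).im := by
    rw [key, Complex.neg_im, him]; ring
  rw [h1]; ring
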